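/- arXiv:2405.01428 — 3 statements merged into one kernel-verified Lean document; each statement's English description precedes it below -/
import Mathlib

section
/- Let B be a flat ring homomorphism A → B of Noetherian rings, let π ∈ A, and let I_A ⊆ A and I_B ⊆ B denote the respective ideals of π-power torsion elements. Then the natural map I_A ⊗_A B → B lands in I_B, i.e., the extension of I_A to B consists of π-power torsion elements; moreover if A → B is faithfully flat then I_B = I_A · B. -/
open TensorProduct in
/-- For a flat algebra `B` over `A`, if `c ∈ A` kills exactly the ideal `K` of `A`,
then any `b : B` killed by `c` lies in the extension of `K`. -/
lemma torsion_aux {A B : Type*} [CommRing A] [CommRing B]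
    [Algebra A B] [Module.Flat A B] (c : A) (K : Ideal A)
    (hK1 : ∀ a ∈ K, c * a = 0) (hK2 : ∀ a : A, c * a = 0 → a ∈ K)
    (b : B) (hb : algebraMap A B c * b = 0) :
    b ∈ K.map (algebraMap A B) := by
  -- the A-linear map A⧸K → A induced by multiplication by c
  have hle : K ≤ LinearMap.ker (LinearMap.lsmul A A c) := by
    intro a ha
    simpa [LinearMap.lsmul_apply, smul_eq_mul] using hK1 a ha
  set f : (A ⧸ K) →ₗ[A] A := Submodule.liftQ K (LinearMap.lsmul A A c) hle with hf
  set φ : (B ⧸ (K • (⊤ : Submodule A B))) →ₗ[A] B :=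
    (TensorProduct.lid A B).toLinearMap ∘ₗ (f.rTensor B) ∘ₗ
      ((quotTensorEquivQuotSMul B K).symm : (B ⧸ (K • (⊤ : Submodule A B))) →ₗ[A] (A ⧸ K) ⊗[A] B)
    with hφ
  have hφb : φ (Submodule.Quotient.mk b) = algebraMap A B c * b := by
    simp only [hφ, LinearMap.comp_apply, LinearEquiv.coe_coe,
      quotTensorEquivQuotSMul_symm_mk, LinearMap.rTensor_tmul]
    have : f (Submodule.Quotient.mk (1 : A)) = c := by
      rw [hf, Submodule.liftQ_apply]; simp
    rw [show ((1 : A ⧸ K)) = Submodule.Quotient.mk (1 : A) from rfl, this]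
    simp [Algebra.smul_def]
  have hφinj : Function.Injective φ := by
    have hfinj : Function.Injective f := by
      rw [← LinearMap.ker_eq_bot, hf, Submodule.ker_liftQ_eq_bot]
      intro a ha
      simp only [LinearMap.mem_ker, LinearMap.lsmul_apply, smul_eq_mul] at ha
      exact hK2 a ha
    exact (TensorProduct.lid A B).injective.comp
      ((Module.Flat.rTensor_preserves_injective_linearMap f hfinj).comp
        (quotTensorEquivQuotSMul B K).symm.injective)
  have : (Submodule.Quotient.mk b : B ⧸ (K • (⊤ : Submodule A B))) = 0 := by
    apply hφinj
    rw [hφb, map_zero, hb]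
  have hmem : b ∈ K • (⊤ : Submodule A B) := (Submodule.Quotient.mk_eq_zero _).mp this
  rwa [Ideal.smul_top_eq_map, Submodule.restrictScalars_mem] at hmem

/-- Formation of the `π`-power torsion ideal is compatible with flat base change:
for a flat map `A → B` of Noetherian rings, the extension of the `π`-power torsion ideal
`I_A` of `A` lands in the `π`-power torsion ideal `I_B` of `B`; if moreover `B` is
faithfully flat over `A`, then `I_B = I_A · B`. -/
theorem torsion_ideal_flat_base_change
    {A B : Type*} [CommRing A] [CommRing B] [IsNoetherianRing A] [IsNoetherianRing B]
    [Algebra A B] [Module.Flat A B] (π : A)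
    (IA : Ideal A) (hIA : ∀ a : A, a ∈ IA ↔ ∃ k : ℕ, π ^ k * a = 0)
    (IB : Ideal B) (hIB : ∀ b : B, b ∈ IB ↔ ∃ k : ℕ, algebraMap A B π ^ k * b = 0) :
    (∀ a ∈ IA, algebraMap A B a ∈ IB) ∧
      (Module.FaithfullyFlat A B → IB = IA.map (algebraMap A B)) := by
  have hmap : ∀ a ∈ IA, algebraMap A B a ∈ IB := by
    intro a ha
    obtain ⟨k, hk⟩ := (hIA a).mp ha
    exact (hIB _).mpr ⟨k, by rw [← map_pow, ← map_mul, hk, map_zero]⟩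
  refine ⟨hmap, fun _ => ?_⟩
  -- find a uniform power of π killing IA
  obtain ⟨s, hs⟩ : IA.FG := IsNoetherian.noetherian IA
  choose! e he using fun a => (hIA a).mp
  set N : ℕ := s.sup e with hN
  have hkill : ∀ a ∈ IA, π ^ N * a = 0 := by
    intro a ha
    have : IA ≤ LinearMap.ker (LinearMap.lsmul A A (π ^ N)) := by
      rw [← hs, Ideal.span_le]
      intro x hx
      have hxIA : x ∈ IA := by rw [← hs]; exact Submodule.subset_span hx
      have h1 : π ^ (e x) * x = 0 := he x hxIA
      have h2 : e x ≤ N := Finset.le_sup hx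
      simp only [SetLike.mem_coe, LinearMap.mem_ker, LinearMap.lsmul_apply, smul_eq_mul]
      calc π ^ N * x = π ^ (N - e x) * (π ^ (e x) * x) := by
            rw [← mul_assoc, ← pow_add]; congr 2; omega
        _ = 0 := by rw [h1, mul_zero]
    simpa using this ha
  apply le_antisymm
  · intro b hb
    obtain ⟨k, hk⟩ := (hIB b).mp hb
    refine torsion_aux (π ^ (N + k)) IA ?_ (fun a h => (hIA a).mpr ⟨N + k, h⟩) b ?_
    · intro a ha
      rw [pow_add, mul_assoc]
      have : π ^ k * a ∈ IA := IA.mul_mem_left _ ha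
      exact by rw [show π ^ k * a = π ^ k * a from rfl]; rw [← mul_assoc, mul_comm (π ^ N) (π ^ k), mul_assoc, hkill a ha, mul_zero]
    · rw [map_pow, pow_add, mul_assoc, hk, mul_zero]
  · rw [Ideal.map_le_iff_le_comap]
    intro a ha
    exact hmap a ha
end

section
/- Let K be a complete nonarchimedean field of residue characteristic ≠ 2 and let M, M' ∈ GLₙ(K) be symmetric matrices. There exists ε > 0 (depending on M) such that if all entries of M − M' have absolute value < ε, then the quadratic forms with Gram matrices M and M' are equivalent over K, i.e., there exists P ∈ GLₙ(K) with Pᵀ M P = M'. -/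
/-!
Look for `P = 1 + X`. If `M X` is symmetric, then `Pᵀ M P = M'` amounts to the quadratic equation
`2 M X + Xᵀ M X = M' - M`, and conversely every solution of that equation makes `M X` symmetric.
The left-hand side has derivative `X ↦ 2 M X` at `0`, which is surjective because `2` and `M` are
invertible, so by the inverse function theorem it maps each neighbourhood of `0` onto a
neighbourhood of `0`. Taking the neighbourhood on which `1 + X` stays invertible yields `P`.
-/

open Matrix Filter Topology

section QuadraticMap

variable {𝕜 V W : Type*} [NontriviallyNormedField 𝕜]
  [NormedAddCommGroup V] [NormedSpace 𝕜 V] [CompleteSpace V]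
  [NormedAddCommGroup W] [NormedSpace 𝕜 W] [CompleteSpace W]

theorem ContinuousLinearMap.map_add_apply_self_nhds_zero (L : V →L[𝕜] W) (hL : L.range = ⊤)
    (B : V →L[𝕜] V →L[𝕜] W) : map (fun x => L x + B x x) (𝓝 0) = 𝓝 0 := by
  have hderiv : HasStrictFDerivAt (fun x => L x + B x x) L 0 := by
    refine (L.hasStrictFDerivAt.add (B.hasStrictFDerivAt_of_bilinear
      (hasStrictFDerivAt_id 0) (hasStrictFDerivAt_id 0))).congr_fderiv ?_
    ext x
    simp
  simpa using hderiv.map_nhds_eq_of_surj hL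

end QuadraticMap

theorem Matrix.one_add_transpose_mul_mul_one_add_eq {R n : Type*} [CommRing R] [Fintype n]
    [DecidableEq n] {M X E : Matrix n n R} (h2 : IsUnit (2 : R)) (hM : M.IsSymm)
    (hE : E.IsSymm) (hX : (2 : R) • (M * X) + Xᵀ * M * X = E) :
    (1 + X)ᵀ * M * (1 + X) = M + E := by
  have hQ : (Xᵀ * M * X).IsSymm := by
    simp [IsSymm, transpose_mul, hM.eq, Matrix.mul_assoc]
  have hMX : (M * X)ᵀ = M * X := by
    apply h2.smul_left_cancel.1
    rw [← transpose_smul, eq_sub_of_add_eq hX, transpose_sub, hE.eq, hQ.eq]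
  have hXM : Xᵀ * M = M * X := by rw [← hMX, transpose_mul, hM.eq]
  rw [← hX, transpose_add, transpose_one]
  simp only [Matrix.add_mul, Matrix.mul_add, Matrix.one_mul, Matrix.mul_one, hXM, two_smul]
  abel

theorem Matrix.eventually_isUnit_det_one_add {K n : Type*} [Field K] [TopologicalSpace K]
    [IsTopologicalRing K] [T1Space K] [Fintype n] [DecidableEq n] :
    ∀ᶠ X in 𝓝 (0 : Matrix n n K), IsUnit (1 + X).det := by
  have hdet : ContinuousAt (fun X : Matrix n n K => (1 + X).det) 0 :=
    (continuous_const.add continuous_id).matrix_det.continuousAt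
  simpa [isUnit_iff_ne_zero] using hdet.eventually_ne (by simp)

attribute [local instance] Matrix.normedAddCommGroup Matrix.normedSpace

theorem gram_matrices_close_implies_congruent_general
    {K : Type*} [NontriviallyNormedField K] [CompleteSpace K]
    (h2 : ‖(2 : K)‖ = 1) {n : ℕ}
    (M : Matrix (Fin n) (Fin n) K) (hMsymm : M.IsSymm) (hM : IsUnit M.det) :
    ∃ ε > (0 : ℝ), ∀ M' : Matrix (Fin n) (Fin n) K, M'.IsSymm → IsUnit M'.det →
      (∀ i j, ‖M i j - M' i j‖ < ε) →
      ∃ P : Matrix (Fin n) (Fin n) K, IsUnit P.det ∧ Pᵀ * M * P = M' := by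
  have h2unit : IsUnit (2 : K) := isUnit_iff_ne_zero.2 (norm_ne_zero_iff.1 (by simp [h2]))
  -- instance search only sees the product uniformity on `Matrix`, not the sup-norm one
  have : @CompleteSpace (Matrix (Fin n) (Fin n) K) PseudoMetricSpace.toUniformSpace :=
    FiniteDimensional.complete K _
  let L : Matrix (Fin n) (Fin n) K →L[K] Matrix (Fin n) (Fin n) K :=
    LinearMap.toContinuousLinearMap ((2 : K) • LinearMap.mulLeft K M)
  have hL : L.range = ⊤ := by
    refine LinearMap.range_eq_top.2 fun Y => ⟨(2 : K)⁻¹ • (M⁻¹ * Y), ?_⟩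
    simp [L, smul_smul, h2unit.ne_zero, ← Matrix.mul_assoc, mul_nonsing_inv M hM]
  let B : Matrix (Fin n) (Fin n) K →L[K] Matrix (Fin n) (Fin n) K →L[K]
      Matrix (Fin n) (Fin n) K :=
    (LinearMap.mk₂ K (fun X Y => Xᵀ * M * Y) (by simp [Matrix.add_mul]) (by simp)
      (by simp [Matrix.mul_add]) (by simp)).toContinuousBilinearMap
  have himage := L.map_add_apply_self_nhds_zero hL B ▸
    image_mem_map eventually_isUnit_det_one_add
  obtain ⟨ε, hε, hball⟩ := Metric.mem_nhds_iff.1 himage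
  refine ⟨ε, hε, fun M' hM'symm _ hclose => ?_⟩
  have hdiff : M' - M ∈ Metric.ball 0 ε := by
    rw [mem_ball_zero_iff, norm_lt_iff hε]
    simpa [norm_sub_rev] using hclose
  obtain ⟨X, hXunit, hX⟩ := hball hdiff
  refine ⟨1 + X, hXunit, ?_⟩
  rw [one_add_transpose_mul_mul_one_add_eq h2unit hMsymm (hM'symm.sub hMsymm) hX]
  abel

/-- Local constancy of the equivalence class of a nondegenerate quadratic form over a
complete nonarchimedean field of residue characteristic `≠ 2` (i.e. `‖2‖ = 1`):
Gram matrices that are sufficiently close are congruent. -/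
theorem gram_matrices_close_implies_congruent
    {K : Type*} [NontriviallyNormedField K] [CompleteSpace K] [IsUltrametricDist K]
    (h2 : ‖(2 : K)‖ = 1) {n : ℕ}
    (M : Matrix (Fin n) (Fin n) K) (hMsymm : M.IsSymm) (hM : IsUnit M.det) :
    ∃ ε > (0 : ℝ), ∀ M' : Matrix (Fin n) (Fin n) K, M'.IsSymm → IsUnit M'.det →
      (∀ i j, ‖M i j - M' i j‖ < ε) →
      ∃ P : Matrix (Fin n) (Fin n) K, IsUnit P.det ∧ Pᵀ * M * P = M' :=
  gram_matrices_close_implies_congruent_general h2 M hMsymm hM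
end

section
/- Let O be a Noetherian local ring and f : X → Spec O a finite type morphism of schemes such that the reduction X_red → Spec k (k the residue field) is finite. If f is universally closed and separated, then for any closed subscheme X' ⊆ X supported on the closed fiber, X' is affine and O_{X'}(X') is a finite O-module. -/
open AlgebraicGeometry CategoryTheory

lemma AlgebraicGeometry.IsFinite.of_isProper_of_finite {X Y : Scheme} (f : X ⟶ Y) [IsProper f]
    [Finite X] : IsFinite f :=
  have : LocallyQuasiFinite f := .of_finite_preimage_singleton f fun _ ↦ Set.toFinite _
  .of_isProper_of_locallyQuasiFinite f

theorem closed_subscheme_finite_over_local_ring_general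
    {O : Type} [CommRing O]
    {X : AlgebraicGeometry.Scheme} (f : X ⟶ Spec (CommRingCat.of O))
    [LocallyOfFiniteType f] [IsSeparated f] [UniversallyClosed f]
    (hfin : Finite X)
    {X' : AlgebraicGeometry.Scheme} (i : X' ⟶ X) [IsClosedImmersion i] :
    IsFinite (i ≫ f) := by
  have : IsProper f := ⟨⟩
  have : IsFinite f := .of_isProper_of_finite f
  infer_instance

/-- Let `O` be a Noetherian local ring and `f : X → Spec O` a finite-type, separated,
universally closed morphism such that `X_red → Spec k` is finite (encoded: the
underlying space of `X` is finite and lies over the closed point). Then any closed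
subscheme `X' ⊆ X` supported on the closed fiber is finite over `Spec O` (in particular
affine with `Γ(X')` a finite `O`-module). -/
theorem closed_subscheme_finite_over_local_ring
    {O : Type} [CommRing O] [IsNoetherianRing O] [IsLocalRing O]
    {X : AlgebraicGeometry.Scheme} (f : X ⟶ Spec (CommRingCat.of O))
    [LocallyOfFiniteType f] [QuasiCompact f] [IsSeparated f] [UniversallyClosed f]
    (hred : ∀ x : X, f.base x = IsLocalRing.closedPoint O)
    (hfin : Finite X)
    {X' : AlgebraicGeometry.Scheme} (i : X' ⟶ X) [IsClosedImmersion i]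
    (hsupp : ∀ x : X', f.base (i.base x) = IsLocalRing.closedPoint O) :
    IsFinite (i ≫ f) :=
  closed_subscheme_finite_over_local_ring_general f hfin i
end
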